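/- Consider an instance of P_m||C_max with m machines and n jobs with processing times p_1 ≥ p_2 ≥ … ≥ p_n ≥ 0, and an LPT schedule. If job i is assigned by LPT in position j on its machine (i.e., exactly j − 1 jobs with indices smaller than i are assigned to the same machine), then p_i ≤ C*/j. -/

import Mathlib

open Finset

/-- Load of machine `i` under schedule `σ` with processing times `p`. -/
def mload {m n : ℕ} (p : Fin n → ℝ) (σ : Fin n → Fin m) (i : Fin m) : ℝ :=
  ∑ j ∈ Finset.univ.filter (fun j => σ j = i), p j

/-- Makespan of a schedule: the maximum machine load. -/
noncomputable def makespan {m n : ℕ} (p : Fin n → ℝ) (σ : Fin n → Fin m) : ℝ :=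
  ⨆ i : Fin m, mload p σ i

/-- Optimal makespan `C*`: minimum makespan over all schedules on `m` machines. -/
noncomputable def optMakespan (m : ℕ) {n : ℕ} (p : Fin n → ℝ) : ℝ :=
  ⨅ σ : Fin n → Fin m, makespan p σ

/-- Processing times are sorted non-increasingly and are nonnegative. -/
def SortedNonneg {n : ℕ} (p : Fin n → ℝ) : Prop :=
  (∀ i j : Fin n, i ≤ j → p j ≤ p i) ∧ ∀ j, 0 ≤ p j

/-- Load of machine `i` just before job `j` is assigned, when all jobs of `T`
are placed first and the remaining jobs are assigned in index order:
it counts all jobs of `T` on machine `i` plus all jobs of index `< j` on machine `i`. -/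
def prefLoad {m n : ℕ} (p : Fin n → ℝ) (σ : Fin n → Fin m) (T : Finset (Fin n))
    (j : Fin n) (i : Fin m) : ℝ :=
  ∑ j' ∈ Finset.univ.filter (fun j' => (j' ∈ T ∨ j' < j) ∧ σ j' = i), p j'

/-- `σ` is a list schedule obtained by first placing all jobs of `T` together on
one machine and then assigning the remaining jobs in index order (i.e. in
non-increasing order of processing time, for sorted `p`), each to a machine of
minimal current load. -/
def IsLSAfter {m n : ℕ} (p : Fin n → ℝ) (T : Finset (Fin n)) (σ : Fin n → Fin m) : Prop :=
  (∀ j ∈ T, ∀ j' ∈ T, σ j = σ j') ∧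
  ∀ j, j ∉ T → ∀ i, prefLoad p σ T j (σ j) ≤ prefLoad p σ T j i

/-- `σ` is an LPT schedule: jobs assigned in order `1,…,n`, each to a machine of
minimal current load. -/
def IsLPT {m n : ℕ} (p : Fin n → ℝ) (σ : Fin n → Fin m) : Prop :=
  IsLSAfter p ∅ σ

/-- `j'` is the critical job of schedule `σ`: it is assigned to a critical machine
(one whose load equals the makespan), and it is the largest-indexed job assigned
to a critical machine. -/
def IsCriticalJob {m n : ℕ} (p : Fin n → ℝ) (σ : Fin n → Fin m) (j' : Fin n) : Prop :=
  mload p σ (σ j') = makespan p σ ∧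
  ∀ j : Fin n, mload p σ (σ j) = makespan p σ → j ≤ j'

/-- The (1-based) position of job `j'` on its machine: the number of jobs of index
`≤ j'` assigned to the same machine as `j'`. -/
def posOn {m n : ℕ} (σ : Fin n → Fin m) (j' : Fin n) : ℕ :=
  (Finset.univ.filter (fun t => σ t = σ j' ∧ t ≤ j')).card

/-- The tuple of the `k` consecutive jobs `j'-k+1, …, j'` (in 1-based terms). -/
def tupleSet {n : ℕ} (j' : Fin n) (k : ℕ) : Finset (Fin n) :=
  Finset.univ.filter (fun t => t ≤ j' ∧ j'.val < t.val + k)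

/-- An LPT′ schedule for critical job `j'`: job `j'` is placed alone on a machine
first, then the remaining jobs are assigned in index order, each to a machine of
minimal current load. -/
def IsLPTprime {m n : ℕ} (p : Fin n → ℝ) (j' : Fin n) (σ' : Fin n → Fin m) : Prop :=
  IsLSAfter p {j'} σ'

/-- An LPT″ schedule for critical job `j'` in position `k`: jobs `j'-k+1,…,j'` are
placed together on one machine first, then the remaining jobs are assigned in
non-increasing order of processing time, each to a machine of minimal current load. -/
def IsLPTsec {m n : ℕ} (p : Fin n → ℝ) (j' : Fin n) (k : ℕ) (σ'' : Fin n → Fin m) : Prop :=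
  IsLSAfter p (tupleSet j' k) σ''

/-!
Put `x = p_i` and count each job `t` of size at least `x` as `⌊p_t / x⌋` units of size `x`.
Induction along the LPT schedule shows that, before job `i` is placed, the rounding loss
`load - x * units` of any machine is less than `x` plus the excess `load - x * jobs` of any other
machine. Against the least loaded machine, which holds `j - 1` jobs, this gives every machine at
least `j - 1` units, so jobs `1, …, i` carry more than `m (j - 1)` units. By pigeonhole, every
schedule puts `j` of these units, hence a load of at least `j x`, on some machine.
-/

section

variable {m n : ℕ} {p : Fin n → ℝ} {σ : Fin n → Fin m} {x : ℝ}

theorem SortedNonneg.antitone (hp : SortedNonneg p) : Antitone p :=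
  fun a b h => hp.1 a b h

theorem mload_le_makespan (p : Fin n → ℝ) (σ : Fin n → Fin m) (a : Fin m) :
    mload p σ a ≤ makespan p σ :=
  le_ciSup (Set.finite_range _).bddAbove a

theorem makespan_nonneg (hp : ∀ t, 0 ≤ p t) (σ : Fin n → Fin m) : 0 ≤ makespan p σ :=
  Real.iSup_nonneg fun _ => sum_nonneg fun t _ => hp t

theorem one_le_floor_div (hx : 0 < x) {a : ℝ} (h : x ≤ a) : 1 ≤ ⌊a / x⌋ := by
  rw [Int.le_floor, Int.cast_one, one_le_div hx]
  exact h

theorem mul_floor_div_le (hx : 0 < x) (a : ℝ) : x * ⌊a / x⌋ ≤ a := by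
  have h := Int.floor_le (a / x)
  rw [le_div_iff₀ hx] at h
  linarith

theorem sub_mul_floor_div_lt (hx : 0 < x) (a : ℝ) : a - x * ⌊a / x⌋ < x := by
  have h := Int.lt_floor_add_one (a / x)
  rw [div_lt_iff₀ hx] at h
  linarith

theorem le_of_sub_mul_lt_sub_mul_add {L M : ℝ} {a b : ℤ} (hx : 0 < x)
    (h : L - x * a < M - x * b + x) (hle : M ≤ L) : b ≤ a := by
  have : (b : ℝ) < a + 1 := by
    by_contra! h'
    nlinarith [mul_le_mul_of_nonneg_left h' hx.le]
  exact Int.lt_add_one_iff.mp (by exact_mod_cast this)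

theorem mul_le_makespan_of_lt_sum_floor_div (hx : 0 < x) (hp : ∀ t, 0 ≤ p t)
    {s : Finset (Fin n)} {b : ℤ} (hb : (m : ℤ) * b < ∑ t ∈ s, ⌊p t / x⌋)
    (σ : Fin n → Fin m) : (b + 1) * x ≤ makespan p σ := by
  obtain ⟨a, -, ha⟩ := exists_lt_sum_fiber_of_maps_to_of_nsmul_lt_sum (w := fun t => ⌊p t / x⌋)
    (fun t _ => mem_univ (σ t)) (by rwa [card_univ, Fintype.card_fin, nsmul_eq_mul])
  have ha' : ((b + 1 : ℤ) : ℝ) ≤ ∑ t ∈ s with σ t = a, (⌊p t / x⌋ : ℝ) := by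
    exact_mod_cast Int.add_one_le_iff.mpr ha
  calc (b + 1) * x ≤ ∑ t ∈ s with σ t = a, x * ⌊p t / x⌋ := by
        rw [← mul_sum, mul_comm]
        push_cast at ha'
        exact mul_le_mul_of_nonneg_left ha' hx.le
    _ ≤ ∑ t ∈ s with σ t = a, p t := sum_le_sum fun t _ => mul_floor_div_le hx (p t)
    _ ≤ mload p σ a :=
        sum_le_sum_of_subset_of_nonneg (filter_subset_filter _ (subset_univ s))
          fun t _ _ => hp t
    _ ≤ makespan p σ := mload_le_makespan p σ a

section JobsBefore

def jobsBefore (σ : Fin n → Fin m) (τ : Fin n) (a : Fin m) : Finset (Fin n) :=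
  {t ∈ Iio τ | σ t = a}

def loadBefore (p : Fin n → ℝ) (σ : Fin n → Fin m) (τ : Fin n) (a : Fin m) : ℝ :=
  ∑ t ∈ jobsBefore σ τ a, p t

noncomputable def unitsBefore (p : Fin n → ℝ) (x : ℝ) (σ : Fin n → Fin m) (τ : Fin n)
    (a : Fin m) : ℤ :=
  ∑ t ∈ jobsBefore σ τ a, ⌊p t / x⌋

@[simp]
theorem mem_jobsBefore {τ t : Fin n} {a : Fin m} :
    t ∈ jobsBefore σ τ a ↔ t < τ ∧ σ t = a := by
  simp [jobsBefore]

theorem jobsBefore_mono {τ₀ τ : Fin n} (h : τ₀ ≤ τ) (a : Fin m) :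
    jobsBefore σ τ₀ a ⊆ jobsBefore σ τ a :=
  fun t ht => by
    rw [mem_jobsBefore] at ht ⊢
    exact ⟨ht.1.trans_le h, ht.2⟩

theorem prefLoad_empty (p : Fin n → ℝ) (σ : Fin n → Fin m) (τ : Fin n) (a : Fin m) :
    prefLoad p σ ∅ τ a = loadBefore p σ τ a := by
  unfold prefLoad loadBefore
  congr 1
  ext t
  simp

theorem IsLPT.loadBefore_le (hσ : IsLPT p σ) (τ : Fin n) (a : Fin m) :
    loadBefore p σ τ (σ τ) ≤ loadBefore p σ τ a := by
  simpa only [prefLoad_empty] using hσ.2 τ (notMem_empty τ) a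

theorem sum_unitsBefore (p : Fin n → ℝ) (x : ℝ) (σ : Fin n → Fin m) (τ : Fin n) :
    ∑ a, unitsBefore p x σ τ a = ∑ t ∈ Iio τ, ⌊p t / x⌋ :=
  sum_fiberwise _ _ _

theorem card_jobsBefore_le_unitsBefore (hx : 0 < x) {τ : Fin n} (hbig : ∀ t < τ, x ≤ p t)
    (a : Fin m) : (#(jobsBefore σ τ a) : ℤ) ≤ unitsBefore p x σ τ a := by
  simpa [unitsBefore] using card_nsmul_le_sum _ _ 1
    fun t ht => one_le_floor_div hx (hbig t (mem_jobsBefore.mp ht).1)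

theorem loadBefore_mono {τ₀ τ : Fin n} (hp : ∀ t < τ, 0 ≤ p t) (h : τ₀ ≤ τ) (a : Fin m) :
    loadBefore p σ τ₀ a ≤ loadBefore p σ τ a :=
  sum_le_sum_of_subset_of_nonneg (jobsBefore_mono h a)
    fun t ht _ => hp t (mem_jobsBefore.mp ht).1

theorem unitsBefore_nonneg {τ : Fin n} (hp : ∀ t < τ, 0 ≤ p t) (hx : 0 ≤ x) (a : Fin m) :
    0 ≤ unitsBefore p x σ τ a :=
  sum_nonneg fun t ht => Int.floor_nonneg.mpr (div_nonneg (hp t (mem_jobsBefore.mp ht).1) hx)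

theorem unitsBefore_mono {τ₀ τ : Fin n} (hp : ∀ t < τ, 0 ≤ p t) (hx : 0 ≤ x) (h : τ₀ ≤ τ)
    (a : Fin m) : unitsBefore p x σ τ₀ a ≤ unitsBefore p x σ τ a :=
  sum_le_sum_of_subset_of_nonneg (jobsBefore_mono h a)
    fun t ht _ => Int.floor_nonneg.mpr (div_nonneg (hp t (mem_jobsBefore.mp ht).1) hx)

/-! `jobsBefore σ τ a = insert u (jobsBefore σ u a)` says that `u` is the last job placed on
machine `a` before time `τ`. -/

theorem jobsBefore_eq_insert_of_isGreatest {τ u : Fin n} {a : Fin m}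
    (hu : IsGreatest (jobsBefore σ τ a : Set (Fin n)) u) :
    jobsBefore σ τ a = insert u (jobsBefore σ u a) := by
  obtain ⟨hu, hmax⟩ := hu
  rw [mem_coe, mem_jobsBefore] at hu
  ext t
  simp only [mem_insert, mem_jobsBefore]
  constructor
  · intro ht
    rcases (hmax (mem_jobsBefore.mpr ht)).lt_or_eq with h | h
    · exact Or.inr ⟨h, ht.2⟩
    · exact Or.inl h
  · rintro (rfl | ht)
    · exact hu
    · exact ⟨ht.1.trans hu.1, ht.2⟩

theorem mem_jobsBefore_of_eq_insert {τ u : Fin n} {a : Fin m}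
    (h : jobsBefore σ τ a = insert u (jobsBefore σ u a)) : u < τ ∧ σ u = a :=
  mem_jobsBefore.mp (h ▸ mem_insert_self _ _)

theorem jobsBefore_eq_empty_or_exists_last (σ : Fin n → Fin m) (τ : Fin n) (a : Fin m) :
    jobsBefore σ τ a = ∅ ∨ ∃ u, jobsBefore σ τ a = insert u (jobsBefore σ u a) := by
  rcases (jobsBefore σ τ a).eq_empty_or_nonempty with h | h
  · exact Or.inl h
  · exact Or.inr ⟨_, jobsBefore_eq_insert_of_isGreatest (isGreatest_max' _ h)⟩

theorem jobsBefore_eq_or_exists_last (σ : Fin n → Fin m) {τ₀ τ : Fin n} (h : τ₀ ≤ τ) (a : Fin m) :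
    jobsBefore σ τ a = jobsBefore σ τ₀ a ∨
      ∃ u, τ₀ ≤ u ∧ jobsBefore σ τ a = insert u (jobsBefore σ u a) := by
  set U := {t ∈ jobsBefore σ τ a | τ₀ ≤ t}
  rcases U.eq_empty_or_nonempty with hU | hU
  · left
    refine Subset.antisymm (fun t ht => ?_) (jobsBefore_mono h a)
    have : ¬τ₀ ≤ t := fun h' => notMem_empty t (hU ▸ mem_filter.mpr ⟨ht, h'⟩)
    rw [mem_jobsBefore] at ht ⊢
    exact ⟨not_le.mp this, ht.2⟩
  · right
    obtain ⟨hmem, hmax⟩ := isGreatest_max' U hU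
    rw [mem_coe, mem_filter] at hmem
    refine ⟨_, hmem.2, jobsBefore_eq_insert_of_isGreatest ⟨hmem.1, fun t ht => ?_⟩⟩
    by_cases ht₀ : τ₀ ≤ t
    · exact hmax (mem_filter.mpr ⟨ht, ht₀⟩)
    · exact (not_le.mp ht₀).le.trans hmem.2

theorem loadBefore_eq_add {τ u : Fin n} {a : Fin m}
    (h : jobsBefore σ τ a = insert u (jobsBefore σ u a)) :
    loadBefore p σ τ a = p u + loadBefore p σ u a := by
  rw [loadBefore, h, sum_insert (by simp)]
  rfl

theorem unitsBefore_eq_add {τ u : Fin n} {a : Fin m}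
    (h : jobsBefore σ τ a = insert u (jobsBefore σ u a)) :
    unitsBefore p x σ τ a = ⌊p u / x⌋ + unitsBefore p x σ u a := by
  rw [unitsBefore, h, sum_insert (by simp)]
  rfl

theorem card_jobsBefore_eq_add {τ u : Fin n} {a : Fin m}
    (h : jobsBefore σ τ a = insert u (jobsBefore σ u a)) :
    #(jobsBefore σ τ a) = #(jobsBefore σ u a) + 1 := by
  rw [h, card_insert_of_notMem (by simp)]

end JobsBefore

section Invariant

variable (hx : 0 < x) (hσ : IsLPT p σ)
include hx hσ

theorem loadBefore_sub_unitsBefore_lt_of_last {τ u : Fin n} (hbig : ∀ t < τ, x ≤ p t)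
    {A B : Fin m} (hA : jobsBefore σ τ A = insert u (jobsBefore σ u A))
    (hcard : (#(jobsBefore σ τ B) : ℤ) ≤ unitsBefore p x σ u A) :
    loadBefore p σ τ A - x * unitsBefore p x σ τ A
      < loadBefore p σ τ B - x * #(jobsBefore σ τ B) + x := by
  obtain ⟨huτ, huA⟩ := mem_jobsBefore_of_eq_insert hA
  have hgreedy : loadBefore p σ u A ≤ loadBefore p σ τ B :=
    huA ▸ (hσ.loadBefore_le u B).trans
      (loadBefore_mono (fun t ht => hx.le.trans (hbig t ht)) huτ.le B)
  have hunits : x * #(jobsBefore σ τ B) ≤ x * unitsBefore p x σ u A :=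
    mul_le_mul_of_nonneg_left (by exact_mod_cast hcard) hx.le
  rw [loadBefore_eq_add hA, unitsBefore_eq_add hA]
  push_cast
  linarith [sub_mul_floor_div_lt hx (p u)]

theorem loadBefore_sub_unitsBefore_lt (hp : Antitone p) (τ : Fin n)
    (hbig : ∀ t < τ, x ≤ p t) (A B : Fin m) :
    loadBefore p σ τ A - x * unitsBefore p x σ τ A
      < loadBefore p σ τ B - x * #(jobsBefore σ τ B) + x := by
  induction τ using WellFoundedLT.induction generalizing A B with
  | ind τ ih =>
  have hp₀ : ∀ t < τ, 0 ≤ p t := fun t ht => hx.le.trans (hbig t ht)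
  by_cases hAB : A = B
  · subst hAB
    have := card_jobsBefore_le_unitsBefore (σ := σ) hx hbig A
    have : x * #(jobsBefore σ τ A) ≤ x * unitsBefore p x σ τ A :=
      mul_le_mul_of_nonneg_left (by exact_mod_cast this) hx.le
    linarith
  -- `s` is the last job on `B`; the cases count the jobs that `A` receives after `s`.
  rcases jobsBefore_eq_empty_or_exists_last σ τ B with hB | ⟨s, hB⟩
  · rcases jobsBefore_eq_empty_or_exists_last σ τ A with hA | ⟨u, hA⟩
    · simp [loadBefore, unitsBefore, hA, hB, hx]
    · refine loadBefore_sub_unitsBefore_lt_of_last hx hσ hbig hA ?_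
      rw [hB, card_empty, Nat.cast_zero]
      exact unitsBefore_nonneg (fun t ht => hp₀ t (ht.trans (mem_jobsBefore_of_eq_insert hA).1))
        hx.le A
  obtain ⟨hsτ, hsB⟩ := mem_jobsBefore_of_eq_insert hB
  have ih_s := ih s hsτ (fun t ht => hbig t (ht.trans hsτ)) A B
  have hps := hbig s hsτ
  have hLB := loadBefore_eq_add (p := p) hB
  have hNB : (#(jobsBefore σ τ B) : ℝ) = #(jobsBefore σ s B) + 1 := by
    exact_mod_cast card_jobsBefore_eq_add hB
  rcases jobsBefore_eq_or_exists_last σ hsτ.le A with hA | ⟨u, hsu, hA⟩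
  · have hLA : loadBefore p σ τ A = loadBefore p σ s A := by simp only [loadBefore, hA]
    have hWA : unitsBefore p x σ τ A = unitsBefore p x σ s A := by simp only [unitsBefore, hA]
    rw [hLA, hWA, hLB, hNB]
    linarith
  obtain ⟨huτ, huA⟩ := mem_jobsBefore_of_eq_insert hA
  rcases jobsBefore_eq_or_exists_last σ hsu A with hA' | ⟨u', hsu', hA'⟩
  · have hpu : p u ≤ p s := hp hsu
    have hfloor : x * 1 ≤ x * ⌊p u / x⌋ :=
      mul_le_mul_of_nonneg_left (by exact_mod_cast one_le_floor_div hx (hbig u huτ)) hx.le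
    have hLA : loadBefore p σ u A = loadBefore p σ s A := by simp only [loadBefore, hA']
    have hWA : unitsBefore p x σ u A = unitsBefore p x σ s A := by simp only [unitsBefore, hA']
    rw [loadBefore_eq_add hA, unitsBefore_eq_add hA, hLA, hWA, hLB, hNB]
    push_cast
    linarith
  · obtain ⟨hu'u, -⟩ := mem_jobsBefore_of_eq_insert hA'
    refine loadBefore_sub_unitsBefore_lt_of_last hx hσ hbig hA ?_
    have hBA : (#(jobsBefore σ s B) : ℤ) ≤ unitsBefore p x σ s A :=
      le_of_sub_mul_lt_sub_mul_add hx ih_s (hsB ▸ hσ.loadBefore_le s A)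
    have hmono : unitsBefore p x σ s A ≤ unitsBefore p x σ u' A :=
      unitsBefore_mono (fun t ht => hp₀ t (ht.trans (hu'u.trans huτ))) hx.le hsu' A
    rw [card_jobsBefore_eq_add hB, unitsBefore_eq_add hA']
    push_cast
    linarith [one_le_floor_div hx (hbig u' (hu'u.trans huτ))]

end Invariant

theorem IsLPT.mul_card_lt_sum_floor_div (hσ : IsLPT p σ) (hp : Antitone p) {i : Fin n}
    (hi : 0 < p i) :
    (m : ℤ) * #(jobsBefore σ i (σ i)) < ∑ t ∈ Iic i, ⌊p t / p i⌋ := by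
  have hcard (A : Fin m) : (#(jobsBefore σ i (σ i)) : ℤ) ≤ unitsBefore p (p i) σ i A :=
    le_of_sub_mul_lt_sub_mul_add hi
      (loadBefore_sub_unitsBefore_lt hi hσ hp i (fun t ht => hp ht.le) A (σ i))
      (hσ.loadBefore_le i A)
  calc (m : ℤ) * #(jobsBefore σ i (σ i)) = ∑ _A : Fin m, (#(jobsBefore σ i (σ i)) : ℤ) := by
        simp
    _ ≤ ∑ A, unitsBefore p (p i) σ i A := sum_le_sum fun A _ => hcard A
    _ = ∑ t ∈ Iio i, ⌊p t / p i⌋ := sum_unitsBefore p (p i) σ i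
    _ < ∑ t ∈ Iic i, ⌊p t / p i⌋ := by
        rw [← Iio_insert, sum_insert notMem_Iio_self, div_self hi.ne', Int.floor_one]
        omega

end

theorem stmt15_general {m n : ℕ}
    (p : Fin n → ℝ) (hp : SortedNonneg p)
    (σ : Fin n → Fin m) (hσ : IsLPT p σ)
    (i : Fin n) (j : ℕ) (hj : 0 < j)
    (hpos : (Finset.univ.filter (fun t => t < i ∧ σ t = σ i)).card = j - 1) :
    p i ≤ optMakespan m p / j := by
  have : Nonempty (Fin n → Fin m) := ⟨σ⟩
  rw [le_div_iff₀ (by exact_mod_cast hj)]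
  refine le_ciInf fun σ' => ?_
  rcases (hp.2 i).eq_or_lt with hzero | hi
  · rw [← hzero, zero_mul]
    exact makespan_nonneg hp.2 σ'
  have hcard : (#(jobsBefore σ i (σ i)) : ℝ) + 1 = j := by
    have : jobsBefore σ i (σ i) = univ.filter (fun t => t < i ∧ σ t = σ i) := by ext; simp
    rw [this, hpos, Nat.cast_sub hj, Nat.cast_one, sub_add_cancel]
  simpa [hcard, mul_comm] using
    mul_le_makespan_of_lt_sum_floor_div hi hp.2 (hσ.mul_card_lt_sum_floor_div hp.antitone hi) σ'

/-- Proposition 2: if LPT assigns job `i` in position `j` on its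
machine (i.e. exactly `j−1` jobs with smaller indices are on the same machine),
then `p_i ≤ C*/j`. -/
theorem stmt15 {m n : ℕ} (hm : 0 < m)
    (p : Fin n → ℝ) (hp : SortedNonneg p)
    (σ : Fin n → Fin m) (hσ : IsLPT p σ)
    (i : Fin n) (j : ℕ) (hj : 0 < j)
    (hpos : (Finset.univ.filter (fun t => t < i ∧ σ t = σ i)).card = j - 1) :
    p i ≤ optMakespan m p / j :=
  stmt15_general p hp σ hσ i j hj hpos
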